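/- arXiv:2603.06949 — 4 statements merged into one kernel-verified Lean document; each statement's English description precedes it below -/
import Mathlib

section
/- Let σ : [a,b] → ℝ be C³ and define ν(σ) = ∫_a^b (σ cos θ + σ_θ sin θ) σ (σ_θθ + σ) dθ. Then the first variation of ν at the constant function 1 in the direction v equals [2v sin θ + v_θ cos θ]_a^b + ∫_a^b v cos θ dθ; that is, d/dε|_{ε=0} ν(1+εv) = 2v(b)sin b − 2v(a)sin a + v_θ(b)cos b − v_θ(a)cos a + ∫_a^b v cos θ dθ. -/
/-!
Writing `s = σ cos θ + σ_θ sin θ` and `k = σ_θθ + σ`, both are affine in `σ`, so for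
`σ = 1 + εv` the integrand is `(cos θ + ε s_v)(1 + εv)(1 + ε k_v)`, a cubic polynomial in `ε`
whose linear coefficient is `s_v + v cos θ + k_v cos θ`. Both `s_v = (v sin θ)_θ` and
`k_v cos θ = (v_θ cos θ + v sin θ)_θ` are exact derivatives, which produces the boundary terms.
-/

open Real Set intervalIntegral

namespace FirstVariation

variable {a b : ℝ}

theorem hasDerivAt_integral_cubic {f₀ f₁ f₂ f₃ : ℝ → ℝ}
    (h₀ : IntervalIntegrable f₀ MeasureTheory.volume a b)
    (h₁ : IntervalIntegrable f₁ MeasureTheory.volume a b)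
    (h₂ : IntervalIntegrable f₂ MeasureTheory.volume a b)
    (h₃ : IntervalIntegrable f₃ MeasureTheory.volume a b) :
    HasDerivAt (fun ε => ∫ θ in a..b, f₀ θ + ε * f₁ θ + ε ^ 2 * f₂ θ + ε ^ 3 * f₃ θ)
      (∫ θ in a..b, f₁ θ) 0 := by
  have hpoly : (fun ε => ∫ θ in a..b, f₀ θ + ε * f₁ θ + ε ^ 2 * f₂ θ + ε ^ 3 * f₃ θ) =
      fun ε => (∫ θ in a..b, f₀ θ) + ε * (∫ θ in a..b, f₁ θ) + ε ^ 2 * (∫ θ in a..b, f₂ θ) +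
        ε ^ 3 * (∫ θ in a..b, f₃ θ) := by
    funext ε
    rw [integral_add ((h₀.add (h₁.const_mul ε)).add (h₂.const_mul _)) (h₃.const_mul _),
      integral_add (h₀.add (h₁.const_mul ε)) (h₂.const_mul _), integral_add h₀ (h₁.const_mul ε)]
    simp only [integral_const_mul]
  rw [hpoly]
  refine HasDerivAt.congr_deriv ((((hasDerivAt_id' (0 : ℝ)).mul_const _).const_add _).add
    ((hasDerivAt_pow 2 (0 : ℝ)).mul_const _) |>.add ((hasDerivAt_pow 3 (0 : ℝ)).mul_const _)) ?_
  simp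

/-- The first coordinate `σ cos θ + σ_θ sin θ` of the curve with support function `σ`. -/
noncomputable def firstCoord (σ : ℝ → ℝ) (θ : ℝ) : ℝ :=
  σ θ * cos θ + deriv σ θ * sin θ

/-- The radius of curvature `σ_θθ + σ` of the curve with support function `σ`. -/
noncomputable def curvatureRadius (σ : ℝ → ℝ) (θ : ℝ) : ℝ :=
  deriv (deriv σ) θ + σ θ

noncomputable def nu (a b : ℝ) (σ : ℝ → ℝ) : ℝ :=
  ∫ θ in a..b, firstCoord σ θ * σ θ * curvatureRadius σ θ

variable {v : ℝ → ℝ}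

theorem deriv_one_add_mul (ε : ℝ) :
    deriv (fun x => 1 + ε * v x) = fun x => ε * deriv v x := by
  funext x
  simp only [deriv_const_add', deriv_const_mul_field']

theorem firstCoord_one_add_mul (ε θ : ℝ) :
    firstCoord (fun x => 1 + ε * v x) θ = cos θ + ε * firstCoord v θ := by
  simp only [firstCoord, deriv_one_add_mul]
  ring

theorem curvatureRadius_one_add_mul (ε θ : ℝ) :
    curvatureRadius (fun x => 1 + ε * v x) θ = 1 + ε * curvatureRadius v θ := by
  simp only [curvatureRadius, deriv_one_add_mul, deriv_const_mul_field']
  ring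

theorem continuous_firstCoord (hv : ContDiff ℝ 1 v) : Continuous (firstCoord v) := by
  have := hv.continuous_deriv le_rfl
  unfold firstCoord
  fun_prop

theorem continuous_curvatureRadius (hv : ContDiff ℝ 2 v) :
    Continuous (curvatureRadius v) := by
  have h₀ := hv.continuous
  have h₂ := (ContDiff.deriv' (n := 1) hv).continuous_deriv le_rfl
  unfold curvatureRadius
  fun_prop

theorem integral_firstCoord (hv : ContDiff ℝ 1 v) :
    ∫ θ in a..b, firstCoord v θ = v b * sin b - v a * sin a := by
  refine integral_eq_sub_of_hasDerivAt (f := fun θ => v θ * sin θ) (fun θ _ => ?_)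
    ((continuous_firstCoord hv).intervalIntegrable a b)
  refine ((hv.differentiable one_ne_zero θ).hasDerivAt.mul (hasDerivAt_sin θ)).congr_deriv ?_
  simp only [firstCoord]
  ring

theorem integral_curvatureRadius_mul_cos (hv : ContDiff ℝ 2 v) :
    ∫ θ in a..b, curvatureRadius v θ * cos θ =
      deriv v b * cos b + v b * sin b - (deriv v a * cos a + v a * sin a) := by
  have hv' : ContDiff ℝ 1 (deriv v) := ContDiff.deriv' (n := 1) hv
  refine integral_eq_sub_of_hasDerivAt (f := fun θ => deriv v θ * cos θ + v θ * sin θ)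
    (f' := fun θ => curvatureRadius v θ * cos θ) (fun θ _ => ?_)
    (((continuous_curvatureRadius hv).mul continuous_cos).intervalIntegrable a b)
  refine (((hv'.differentiable one_ne_zero θ).hasDerivAt.mul (hasDerivAt_cos θ)).add
    ((hv.differentiable two_ne_zero θ).hasDerivAt.mul (hasDerivAt_sin θ))).congr_deriv ?_
  simp only [curvatureRadius]
  ring

theorem hasDerivAt_nu_one_add_mul (hv : ContDiff ℝ 2 v) :
    HasDerivAt (fun ε => nu a b (fun x => 1 + ε * v x))
      (∫ θ in a..b, firstCoord v θ + v θ * cos θ + curvatureRadius v θ * cos θ) 0 := by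
  have expand : ∀ ε θ, firstCoord (fun x => 1 + ε * v x) θ * (1 + ε * v θ) *
      curvatureRadius (fun x => 1 + ε * v x) θ =
        cos θ + ε * (firstCoord v θ + v θ * cos θ + curvatureRadius v θ * cos θ) +
        ε ^ 2 * (firstCoord v θ * v θ + firstCoord v θ * curvatureRadius v θ +
          cos θ * v θ * curvatureRadius v θ) +
        ε ^ 3 * (firstCoord v θ * v θ * curvatureRadius v θ) := by
    intro ε θ
    rw [firstCoord_one_add_mul, curvatureRadius_one_add_mul]
    ring
  have hs := continuous_firstCoord (hv.of_le one_le_two)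
  have hk := continuous_curvatureRadius hv
  have hv₀ := hv.continuous
  simp only [nu, expand]
  apply hasDerivAt_integral_cubic <;> apply Continuous.intervalIntegrable <;> fun_prop

theorem integral_firstVariation_coeff (hv : ContDiff ℝ 2 v) :
    ∫ θ in a..b, firstCoord v θ + v θ * cos θ + curvatureRadius v θ * cos θ =
      2 * v b * sin b - 2 * v a * sin a + deriv v b * cos b - deriv v a * cos a +
        ∫ θ in a..b, v θ * cos θ := by
  have hv₁ : ContDiff ℝ 1 v := hv.of_le one_le_two
  have hs : IntervalIntegrable (firstCoord v) MeasureTheory.volume a b :=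
    (continuous_firstCoord hv₁).intervalIntegrable a b
  have hvcos : IntervalIntegrable (fun θ => v θ * cos θ) MeasureTheory.volume a b :=
    (hv.continuous.mul continuous_cos).intervalIntegrable a b
  have hkcos :
      IntervalIntegrable (fun θ => curvatureRadius v θ * cos θ) MeasureTheory.volume a b :=
    ((continuous_curvatureRadius hv).mul continuous_cos).intervalIntegrable a b
  rw [integral_add (hs.add hvcos) hkcos, integral_add hs hvcos, integral_firstCoord hv₁,
    integral_curvatureRadius_mul_cos hv]
  ring

end FirstVariation

open FirstVariation in
theorem stmt_4_general (a b : ℝ) (v : ℝ → ℝ) (hv : ContDiff ℝ 3 v) :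
    HasDerivAt
      (fun ε : ℝ => ∫ θ in a..b,
        ((1 + ε * v θ) * Real.cos θ + deriv (fun x => 1 + ε * v x) θ * Real.sin θ) *
          (1 + ε * v θ) * (deriv (deriv (fun x => 1 + ε * v x)) θ + (1 + ε * v θ)))
      (2 * v b * Real.sin b - 2 * v a * Real.sin a +
        deriv v b * Real.cos b - deriv v a * Real.cos a +
        ∫ θ in a..b, v θ * Real.cos θ) 0 := by
  have hv₂ : ContDiff ℝ 2 v := hv.of_le (by norm_num)
  exact (hasDerivAt_nu_one_add_mul hv₂).congr_deriv (integral_firstVariation_coeff hv₂)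

/-- with ν(σ) = ∫_a^b (σ cos θ + σ_θ sin θ) σ(σ_θθ + σ) dθ, the first
variation of ν at the constant function 1 in the direction v equals
[2v sin θ + v_θ cos θ]_a^b + ∫_a^b v cos θ dθ. -/
theorem stmt_4 (a b : ℝ) (hab : a ≤ b) (v : ℝ → ℝ) (hv : ContDiff ℝ 3 v) :
    HasDerivAt
      (fun ε : ℝ => ∫ θ in a..b,
        ((1 + ε * v θ) * Real.cos θ + deriv (fun x => 1 + ε * v x) θ * Real.sin θ) *
          (1 + ε * v θ) * (deriv (deriv (fun x => 1 + ε * v x)) θ + (1 + ε * v θ)))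
      (2 * v b * Real.sin b - 2 * v a * Real.sin a +
        deriv v b * Real.cos b - deriv v a * Real.cos a +
        ∫ θ in a..b, v θ * Real.cos θ) 0 :=
  stmt_4_general a b v hv
end

section
/- Let λ : [0,T) → (0,∞) be C¹ with λ(t) → ∞ as t → T, and suppose there is C > 0 such that 2 − C/Λ − CΛ/λ² ≤ 2λ_t/λ³ ≤ 2 + C/Λ + CΛ/λ² for all t, where Λ(t) = (2(T−t))^{−1/2}. Then there exists C' > 0 such that |λ(t)^{−2} − Λ(t)^{−2}| ≤ C' Λ(t)^{−3} for all t ∈ [0,T); equivalently 1/λ² = 1/Λ² + O(Λ^{−3}). -/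
/-!
Write `f = λ⁻²` and `ρ = Λ⁻¹ = √(2(T - t))`, so that `ρ' = -1/ρ`, `ρ² = 2(T - t)` and the
hypothesis reads `|f' + 2| ≤ Cρ + Cf/ρ`. The integrating factors `e^{∓Cρ}` absorb the term `Cf/ρ`:
`(e^{-Cρ} f)' ≥ -(2 + Cρ)` and `(e^{Cρ} f)' ≤ Cρ e^{Cρ} - 2`. Since `f → 0` and `ρ → 0` as
`t → T`, and `ρ` decreases, integrating from `t` to `T` gives
`e^{-Cρ} f ≤ (2 + Cρ)(T - t)` and `e^{Cρ} f ≥ (2 - Cρ e^{Cρ})(T - t)`, whence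
`|f - ρ²| ≤ (3/2) C e^{Cρ} ρ³`.
-/

open Real Set Filter Topology

section MeanValue

variable {g g' : ℝ → ℝ} {a b B L : ℝ}

lemma le_sub_mul_sub_of_le_deriv_of_tendsto (hab : a < b)
    (hg : ∀ s ∈ Ico a b, HasDerivAt g (g' s) s) (hB : ∀ s ∈ Ico a b, B ≤ g' s)
    (hlim : Tendsto g (𝓝[<] b) (𝓝 L)) : g a ≤ L - B * (b - a) := by
  have hslope : ∀ y ∈ Ico a b, g a ≤ g y - B * (y - a) := fun y hy => by
    have := (convex_Ico a b).mul_sub_le_image_sub_of_le_deriv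
      (fun s hs => (hg s hs).continuousAt.continuousWithinAt)
      (fun s hs => (hg s (interior_subset hs)).differentiableAt.differentiableWithinAt)
      (fun s hs => (hg s (interior_subset hs)).deriv ▸ hB s (interior_subset hs))
      a (left_mem_Ico.2 hab) y hy hy.1
    linarith
  have hline : Tendsto (fun y => B * (y - a)) (𝓝[<] b) (𝓝 (B * (b - a))) :=
    tendsto_nhdsWithin_of_tendsto_nhds ((by fun_prop : Continuous fun y => B * (y - a)).tendsto b)
  refine ge_of_tendsto (hlim.sub hline) ?_
  filter_upwards [Ioo_mem_nhdsLT hab] with y hy using hslope y (Ioo_subset_Ico_self hy)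

lemma sub_mul_sub_le_of_deriv_le_of_tendsto (hab : a < b)
    (hg : ∀ s ∈ Ico a b, HasDerivAt g (g' s) s) (hB : ∀ s ∈ Ico a b, g' s ≤ B)
    (hlim : Tendsto g (𝓝[<] b) (𝓝 L)) : L - B * (b - a) ≤ g a := by
  have := le_sub_mul_sub_of_le_deriv_of_tendsto hab (fun s hs => (hg s hs).neg)
    (fun s hs => neg_le_neg (hB s hs)) hlim.neg
  simp only [Pi.neg_apply] at this
  linarith

end MeanValue

-- The paper's `Λ(t)⁻¹`.
noncomputable def parabolicRadius (T t : ℝ) : ℝ := √(2 * (T - t))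

namespace parabolicRadius

variable {T t : ℝ}

lemma sq (ht : t ≤ T) : parabolicRadius T t ^ 2 = 2 * (T - t) :=
  Real.sq_sqrt (by linarith)

lemma nonneg : 0 ≤ parabolicRadius T t := Real.sqrt_nonneg _

lemma antitone : Antitone (parabolicRadius T) := fun _ _ h =>
  Real.sqrt_le_sqrt (by linarith)

lemma hasDerivAt (ht : t < T) :
    HasDerivAt (parabolicRadius T) (-(parabolicRadius T t)⁻¹) t := by
  have h : HasDerivAt (parabolicRadius T) (2 * -1 / (2 * parabolicRadius T t)) t :=
    (((hasDerivAt_id' t).const_sub T).const_mul 2).sqrt (by linarith)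
  convert h using 1
  ring

lemma tendsto_zero : Tendsto (parabolicRadius T) (𝓝[<] T) (𝓝 0) := by
  have h : Continuous (parabolicRadius T) := by unfold parabolicRadius; fun_prop
  simpa [parabolicRadius] using tendsto_nhdsWithin_of_tendsto_nhds (h.tendsto T)

end parabolicRadius

lemma HasDerivAt.inv_sq {lam : ℝ → ℝ} {l t : ℝ} (h : HasDerivAt lam l t) (ht : lam t ≠ 0) :
    HasDerivAt (fun s => (lam s ^ 2)⁻¹) (-(2 * l / lam t ^ 3)) t := by
  refine ((h.fun_pow 2).fun_inv (pow_ne_zero 2 ht)).congr_deriv ?_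
  norm_num
  field_simp

lemma abs_sub_two_mul_le_of_exp_bounds {x d v : ℝ} (hx : 0 ≤ x) (hd : 0 ≤ d)
    (hup : exp (-x) * v ≤ (2 + x) * d) (hlo : (2 - x * exp x) * d ≤ exp x * v) :
    |v - 2 * d| ≤ 3 * x * exp x * d := by
  set y := exp x
  have hy1 : 1 ≤ y := one_le_exp hx
  have hyx : y - 1 ≤ x * y := by
    have := mul_le_mul_of_nonneg_left (add_one_le_exp (-x)) (exp_pos x).le
    rw [← exp_add, add_neg_cancel, exp_zero] at this
    linarith
  have hv_le : v ≤ (2 + x) * d * y := by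
    have := mul_le_mul_of_nonneg_left hup (exp_pos x).le
    rwa [← mul_assoc, ← exp_add, add_neg_cancel, exp_zero, one_mul, mul_comm] at this
  have hxd : 0 ≤ x * d := mul_nonneg hx hd
  rw [abs_le]
  constructor
  · nlinarith [mul_le_mul_of_nonneg_left hyx hd]
  · nlinarith [mul_le_mul_of_nonneg_left hyx hd, mul_le_mul_of_nonneg_left hy1 hxd]

section ExtinctionRate

variable {T C t : ℝ} {f f' : ℝ → ℝ}

local notation "ρ" => parabolicRadius T

lemma hasDerivAt_exp_mul_parabolicRadius_mul (c : ℝ) {s : ℝ} (hs : s < T)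
    (hf : HasDerivAt f (f' s) s) :
    HasDerivAt (fun s => exp (c * ρ s) * f s) (exp (c * ρ s) * (f' s - c * (f s / ρ s))) s := by
  refine ((((parabolicRadius.hasDerivAt hs).const_mul c).exp).fun_mul hf).congr_deriv ?_
  ring

lemma tendsto_exp_mul_parabolicRadius_mul (c : ℝ) (hf0 : Tendsto f (𝓝[<] T) (𝓝 0)) :
    Tendsto (fun s => exp (c * ρ s) * f s) (𝓝[<] T) (𝓝 0) := by
  have h := ((continuous_exp.tendsto _).comp
    ((parabolicRadius.tendsto_zero (T := T)).const_mul c)).mul hf0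
  simpa using h

lemma exp_neg_mul_parabolicRadius_mul_le (hC : 0 ≤ C) (ht : t < T)
    (hf : ∀ s ∈ Ico t T, HasDerivAt f (f' s) s) (hf0 : Tendsto f (𝓝[<] T) (𝓝 0))
    (hub : ∀ s ∈ Ico t T, -f' s ≤ 2 + C * ρ s + C * (f s / ρ s)) :
    exp (-C * ρ t) * f t ≤ (2 + C * ρ t) * (T - t) := by
  have hbound : ∀ s ∈ Ico t T,
      -(2 + C * ρ t) ≤ exp (-C * ρ s) * (f' s - -C * (f s / ρ s)) := fun s hs => by
    have hρ : C * ρ s ≤ C * ρ t := mul_le_mul_of_nonneg_left (parabolicRadius.antitone hs.1) hC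
    have hρ0 : 0 ≤ C * ρ s := mul_nonneg hC parabolicRadius.nonneg
    have he : exp (-C * ρ s) ≤ 1 := exp_le_one_iff.2 (by linarith [neg_mul C (ρ s)])
    nlinarith [exp_pos (-C * ρ s), hub s hs]
  have := le_sub_mul_sub_of_le_deriv_of_tendsto ht
    (fun s hs => hasDerivAt_exp_mul_parabolicRadius_mul (-C) hs.2 (hf s hs)) hbound
    (tendsto_exp_mul_parabolicRadius_mul (-C) hf0)
  linarith

lemma le_exp_mul_parabolicRadius_mul (hC : 0 ≤ C) (ht : t < T)
    (hf : ∀ s ∈ Ico t T, HasDerivAt f (f' s) s) (hf0 : Tendsto f (𝓝[<] T) (𝓝 0))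
    (hlb : ∀ s ∈ Ico t T, 2 - C * ρ s - C * (f s / ρ s) ≤ -f' s) :
    (2 - C * ρ t * exp (C * ρ t)) * (T - t) ≤ exp (C * ρ t) * f t := by
  have hbound : ∀ s ∈ Ico t T,
      exp (C * ρ s) * (f' s - C * (f s / ρ s)) ≤ C * ρ t * exp (C * ρ t) - 2 := fun s hs => by
    have hρ : C * ρ s ≤ C * ρ t := mul_le_mul_of_nonneg_left (parabolicRadius.antitone hs.1) hC
    have hρ0 : 0 ≤ C * ρ s := mul_nonneg hC parabolicRadius.nonneg
    have he : C * ρ s * exp (C * ρ s) ≤ C * ρ t * exp (C * ρ t) :=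
      mul_le_mul hρ (exp_le_exp.2 hρ) (exp_pos _).le (hρ0.trans hρ)
    nlinarith [exp_pos (C * ρ s), one_le_exp hρ0, hlb s hs]
  have := sub_mul_sub_le_of_deriv_le_of_tendsto ht
    (fun s hs => hasDerivAt_exp_mul_parabolicRadius_mul C hs.2 (hf s hs)) hbound
    (tendsto_exp_mul_parabolicRadius_mul C hf0)
  linarith

theorem abs_sub_le_mul_parabolicRadius_pow_three (hC : 0 ≤ C) (ht : t < T)
    (hf : ∀ s ∈ Ico t T, HasDerivAt f (f' s) s) (hf0 : Tendsto f (𝓝[<] T) (𝓝 0))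
    (hlb : ∀ s ∈ Ico t T, 2 - C * ρ s - C * (f s / ρ s) ≤ -f' s)
    (hub : ∀ s ∈ Ico t T, -f' s ≤ 2 + C * ρ s + C * (f s / ρ s)) :
    |f t - 2 * (T - t)| ≤ 3 / 2 * C * exp (C * ρ t) * ρ t ^ 3 := by
  have h := abs_sub_two_mul_le_of_exp_bounds (mul_nonneg hC parabolicRadius.nonneg)
    (sub_nonneg.2 ht.le)
    (by simpa [neg_mul] using exp_neg_mul_parabolicRadius_mul_le hC ht hf hf0 hub)
    (le_exp_mul_parabolicRadius_mul hC ht hf hf0 hlb)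
  convert h using 1
  rw [pow_succ, parabolicRadius.sq ht.le]
  ring

end ExtinctionRate

theorem stmt_9_general (T C : ℝ) (hC : 0 < C) (lam lam' : ℝ → ℝ)
    (hpos : ∀ t ∈ Set.Ico (0:ℝ) T, 0 < lam t)
    (hd : ∀ t ∈ Set.Ico (0:ℝ) T, HasDerivAt lam (lam' t) t)
    (hlim : Filter.Tendsto lam (nhdsWithin T (Set.Iio T)) Filter.atTop)
    (hlb : ∀ t ∈ Set.Ico (0:ℝ) T,
      2 - C * Real.sqrt (2 * (T - t)) - C * ((lam t)^2 * Real.sqrt (2 * (T - t)))⁻¹ ≤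
        2 * lam' t / (lam t)^3)
    (hub : ∀ t ∈ Set.Ico (0:ℝ) T,
      2 * lam' t / (lam t)^3 ≤
        2 + C * Real.sqrt (2 * (T - t)) + C * ((lam t)^2 * Real.sqrt (2 * (T - t)))⁻¹) :
    ∃ C' > 0, ∀ t ∈ Set.Ico (0:ℝ) T,
      |((lam t)^2)⁻¹ - 2 * (T - t)| ≤ C' * (Real.sqrt (2 * (T - t)))^3 := by
  have hf0 : Tendsto (fun s => (lam s ^ 2)⁻¹) (𝓝[<] T) (𝓝 0) :=
    ((tendsto_pow_atTop two_ne_zero).comp hlim).inv_tendsto_atTop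
  refine ⟨3 / 2 * C * exp (C * parabolicRadius T 0), by positivity, fun t ht => ?_⟩
  have hsub : Ico t T ⊆ Ico 0 T := Ico_subset_Ico_left ht.1
  have h := abs_sub_le_mul_parabolicRadius_pow_three (f' := fun s => -(2 * lam' s / lam s ^ 3))
    hC.le ht.2 (fun s hs => (hd s (hsub hs)).inv_sq (hpos s (hsub hs)).ne') hf0
    (fun s hs => by
      simpa only [neg_neg, div_eq_mul_inv, mul_inv, parabolicRadius] using hlb s (hsub hs))
    (fun s hs => by
      simpa only [neg_neg, div_eq_mul_inv, mul_inv, parabolicRadius] using hub s (hsub hs))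
  refine h.trans (mul_le_mul_of_nonneg_right ?_ (pow_nonneg parabolicRadius.nonneg 3))
  gcongr
  exact parabolicRadius.antitone ht.1

/-- if λ is C¹ on [0,T), λ → ∞ as t → T, and
2 − C/Λ − CΛ/λ² ≤ 2λ_t/λ³ ≤ 2 + C/Λ + CΛ/λ² with Λ = (2(T−t))^{−1/2}, then
1/λ² = 1/Λ² + O(Λ^{−3}), i.e. |λ⁻² − 2(T−t)| ≤ C'·(√(2(T−t)))³. -/
theorem stmt_9 (T C : ℝ) (hT : 0 < T) (hC : 0 < C) (lam lam' : ℝ → ℝ)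
    (hpos : ∀ t ∈ Set.Ico (0:ℝ) T, 0 < lam t)
    (hd : ∀ t ∈ Set.Ico (0:ℝ) T, HasDerivAt lam (lam' t) t)
    (hcont : ContinuousOn lam' (Set.Ico (0:ℝ) T))
    (hlim : Filter.Tendsto lam (nhdsWithin T (Set.Iio T)) Filter.atTop)
    (hlb : ∀ t ∈ Set.Ico (0:ℝ) T,
      2 - C * Real.sqrt (2 * (T - t)) - C * ((lam t)^2 * Real.sqrt (2 * (T - t)))⁻¹ ≤
        2 * lam' t / (lam t)^3)
    (hub : ∀ t ∈ Set.Ico (0:ℝ) T,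
      2 * lam' t / (lam t)^3 ≤
        2 + C * Real.sqrt (2 * (T - t)) + C * ((lam t)^2 * Real.sqrt (2 * (T - t)))⁻¹) :
    ∃ C' > 0, ∀ t ∈ Set.Ico (0:ℝ) T,
      |((lam t)^2)⁻¹ - 2 * (T - t)| ≤ C' * (Real.sqrt (2 * (T - t)))^3 :=
  stmt_9_general T C hC lam lam' hpos hd hlim hlb hub
end

section
/- Suppose g : [0,T) → ℝ is C¹ and satisfies (g·A)'(t) = −Δ(t) + δ(t) where A(t) > 0, |Δ(t)| ≤ ε(t)·Λ(t)^{−1} with ε(t) → 0, |δ(t)| ≤ C Λ(t)^{−2}, g(t)A(t) → 0 as t → T, and A(t) ≥ c Λ(t)^{−2} for constants c, C > 0, where Λ(t) = (2(T−t))^{−1/2}. Then g(t) = O(Λ(t)^{−1}), i.e., there exists C' with |g(t)| ≤ C' Λ(t)^{−1} for all t ∈ [0,T). -/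
/-!
Near the blow-up time the sources are small: once `ε ≤ 1`, the derivative of `g A` on `[t, T)` is
bounded by `Λ(t)⁻¹ + C Λ(t)⁻²`. Since `g A → 0` at `T`, the mean value inequality gives
`|g A|(t) ≤ (T - t)(Λ(t)⁻¹ + C Λ(t)⁻²) = O(Λ(t)⁻³)`, and dividing by `A(t) ≥ c Λ(t)⁻²` yields
`|g(t)| = O(Λ(t)⁻¹)`. Away from `T`, `g A` is continuous on a compact interval and `A` is bounded
below, so `g` is bounded there, while `Λ⁻¹` is bounded below.
-/

open Real Set Filter Topology

theorem norm_le_mul_sub_of_tendsto_nhdsLT_zero {E : Type*} [NormedAddCommGroup E]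
    [NormedSpace ℝ E] {F F' : ℝ → E} {t T K : ℝ} (htT : t < T)
    (hF : ∀ u ∈ Ico t T, HasDerivAt F (F' u) u) (hF' : ∀ u ∈ Ico t T, ‖F' u‖ ≤ K)
    (hlim : Tendsto F (𝓝[<] T) (𝓝 0)) : ‖F t‖ ≤ K * (T - t) := by
  have hmvt : ∀ s ∈ Ioo t T, ‖F s - F t‖ ≤ K * (s - t) := fun s hs =>
    norm_image_sub_le_of_norm_deriv_le_segment'
      (fun u hu => (hF u ⟨hu.1, hu.2.trans_lt hs.2⟩).hasDerivWithinAt)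
      (fun u hu => hF' u ⟨hu.1, hu.2.trans hs.2⟩) s ⟨hs.1.le, le_rfl⟩
  have hleft : Tendsto (fun s => ‖F s - F t‖) (𝓝[<] T) (𝓝 ‖F t‖) := by
    simpa using (hlim.sub_const (F t)).norm
  have hright : Tendsto (fun s => K * (s - t)) (𝓝[<] T) (𝓝 (K * (T - t))) :=
    ((continuous_const.mul (continuous_id.sub continuous_const)).tendsto T).mono_left
      nhdsWithin_le_nhds
  exact le_of_tendsto_of_tendsto hleft hright
    (eventually_of_mem (Ioo_mem_nhdsLT htT) hmvt)

theorem abs_le_div_of_abs_mul_le {x a b M : ℝ} (hb : 0 < b) (hba : b ≤ a)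
    (h : |x * a| ≤ M) : |x| ≤ M / b := by
  rw [le_div_iff₀ hb]
  calc |x| * b ≤ |x| * a := mul_le_mul_of_nonneg_left hba (abs_nonneg x)
    _ = |x * a| := by rw [abs_mul, abs_of_pos (hb.trans_le hba)]
    _ ≤ M := h

theorem exists_pos_abs_le_mul_of_head_tail {S : Set ℝ} {f w : ℝ → ℝ} {l r B K : ℝ}
    (hr : 0 < r) (hw : ∀ t ∈ S, 0 ≤ w t) (hwr : ∀ t ∈ S, t < l → r ≤ w t)
    (hhead : ∀ t ∈ S, t < l → |f t| ≤ B) (htail : ∀ t ∈ S, l ≤ t → |f t| ≤ K * w t) :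
    ∃ C' > 0, ∀ t ∈ S, |f t| ≤ C' * w t := by
  refine ⟨max (max K (B / r)) 1, by positivity, fun t ht => ?_⟩
  rcases lt_or_ge t l with hhd | htl
  · have hB : 0 ≤ B := (abs_nonneg _).trans (hhead t ht hhd)
    calc |f t| ≤ B := hhead t ht hhd
      _ = B / r * r := by field_simp
      _ ≤ B / r * w t := mul_le_mul_of_nonneg_left (hwr t ht hhd) (by positivity)
      _ ≤ max (max K (B / r)) 1 * w t :=
        mul_le_mul_of_nonneg_right (le_max_of_le_left (le_max_right _ _)) (hw t ht)
  · calc |f t| ≤ K * w t := htail t ht htl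
      _ ≤ max (max K (B / r)) 1 * w t :=
        mul_le_mul_of_nonneg_right (le_max_of_le_left (le_max_left _ _)) (hw t ht)

theorem abs_le_mul_sqrt_of_tendsto_mul_zero {T c C l t : ℝ} {g A Δ δ ε : ℝ → ℝ} (hc : 0 < c)
    (hderiv : ∀ t ∈ Ico (0:ℝ) T, HasDerivAt (fun s => g s * A s) (-Δ t + δ t) t)
    (hε : ∀ u ∈ Ico l T, ε u ≤ 1)
    (hΔ : ∀ t ∈ Ico (0:ℝ) T, |Δ t| ≤ ε t * √(2 * (T - t)))
    (hδ : ∀ t ∈ Ico (0:ℝ) T, |δ t| ≤ C * (2 * (T - t)))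
    (hgA : Tendsto (fun t => g t * A t) (𝓝[<] T) (𝓝 0))
    (hA : ∀ t ∈ Ico (0:ℝ) T, c * (2 * (T - t)) ≤ A t)
    (ht : t ∈ Ico (0:ℝ) T) (hlt : l ≤ t) :
    |g t| ≤ (1 + C * √(2 * T)) / (2 * c) * √(2 * (T - t)) := by
  have hTt : 0 < 2 * (T - t) := by linarith [ht.2]
  have hC : 0 ≤ C := nonneg_of_mul_nonneg_left ((abs_nonneg _).trans (hδ t ht)) hTt
  set ρ := √(2 * (T - t))
  have hρ_sq : ρ ^ 2 = 2 * (T - t) := sq_sqrt hTt.le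
  have hsub : ∀ u ∈ Ico t T, u ∈ Ico (0:ℝ) T := fun u hu => ⟨ht.1.trans hu.1, hu.2⟩
  have hsource : ∀ u ∈ Ico t T, ‖-Δ u + δ u‖ ≤ ρ + C * ρ ^ 2 := by
    intro u hu
    have hρu : √(2 * (T - u)) ≤ ρ := sqrt_le_sqrt (by linarith [hu.1])
    calc ‖-Δ u + δ u‖ ≤ |Δ u| + |δ u| := (abs_add_le _ _).trans_eq (by rw [abs_neg])
      _ ≤ ε u * √(2 * (T - u)) + C * (2 * (T - u)) :=
        add_le_add (hΔ u (hsub u hu)) (hδ u (hsub u hu))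
      _ ≤ 1 * ρ + C * ρ ^ 2 := by
        gcongr
        · exact hε u ⟨hlt.trans hu.1, hu.2⟩
        · rw [hρ_sq]; linarith [hu.1]
      _ = ρ + C * ρ ^ 2 := by rw [one_mul]
  have hgA_t : |g t * A t| ≤ (ρ + C * ρ ^ 2) * (T - t) :=
    norm_le_mul_sub_of_tendsto_nhdsLT_zero ht.2 (fun u hu => hderiv u (hsub u hu)) hsource hgA
  have hρ_le : ρ ≤ √(2 * T) := sqrt_le_sqrt (by linarith [ht.1])
  have hρ_pos : 0 < ρ := sqrt_pos.2 hTt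
  calc |g t| ≤ (ρ + C * ρ ^ 2) * (T - t) / (c * ρ ^ 2) :=
        abs_le_div_of_abs_mul_le (by positivity) (hρ_sq ▸ hA t ht) hgA_t
    _ = (1 + C * ρ) / (2 * c) * ρ := by
        rw [show T - t = ρ ^ 2 / 2 by linarith]; field_simp
    _ ≤ (1 + C * √(2 * T)) / (2 * c) * ρ := by gcongr

theorem stmt_11_general (T c C : ℝ) (hc : 0 < c)
    (g A Δ δ ε : ℝ → ℝ)
    (hderiv : ∀ t ∈ Set.Ico (0:ℝ) T, HasDerivAt (fun s => g s * A s) (-Δ t + δ t) t)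
    (hεlim : Filter.Tendsto ε (nhdsWithin T (Set.Iio T)) (nhds 0))
    (hΔ : ∀ t ∈ Set.Ico (0:ℝ) T, |Δ t| ≤ ε t * Real.sqrt (2 * (T - t)))
    (hδ : ∀ t ∈ Set.Ico (0:ℝ) T, |δ t| ≤ C * (2 * (T - t)))
    (hgA : Filter.Tendsto (fun t => g t * A t) (nhdsWithin T (Set.Iio T)) (nhds 0))
    (hA : ∀ t ∈ Set.Ico (0:ℝ) T, c * (2 * (T - t)) ≤ A t) :
    ∃ C' > 0, ∀ t ∈ Set.Ico (0:ℝ) T, |g t| ≤ C' * Real.sqrt (2 * (T - t)) := by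
  obtain ⟨l, hlT, hε⟩ := mem_nhdsLT_iff_exists_Ico_subset.1
    (hεlim.eventually (Iic_mem_nhds zero_lt_one))
  have hhead_sub : Icc 0 l ⊆ Ico 0 T := fun t ht => ⟨ht.1, ht.2.trans_lt hlT⟩
  obtain ⟨M, hM⟩ := isCompact_Icc.exists_bound_of_continuousOn (s := Icc 0 l)
    fun t ht => (hderiv t (hhead_sub ht)).continuousAt.continuousWithinAt
  have hlT' : 0 < 2 * (T - l) := by linarith [mem_Iio.1 hlT]
  refine exists_pos_abs_le_mul_of_head_tail (l := l) (r := √(2 * (T - l)))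
    (B := M / (c * (2 * (T - l)))) (sqrt_pos.2 hlT') (fun t _ => sqrt_nonneg _)
    (fun t _ htl => sqrt_le_sqrt (by linarith)) (fun t ht htl => ?_)
    (fun t ht htl => abs_le_mul_sqrt_of_tendsto_mul_zero hc hderiv hε hΔ hδ hgA hA ht htl)
  have hA_head : c * (2 * (T - l)) ≤ A t :=
    (hA t ht).trans' (mul_le_mul_of_nonneg_left (by linarith) hc.le)
  exact abs_le_div_of_abs_mul_le (by positivity) hA_head (hM t ⟨ht.1, htl.le⟩)

/-- if (g·A)' = −Δ + δ with |Δ| ≤ ε·Λ⁻¹, ε → 0, |δ| ≤ CΛ⁻²,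
g·A → 0 as t → T, and A ≥ cΛ⁻², where Λ(t) = (2(T−t))^{−1/2}, then g = O(Λ⁻¹). -/
theorem stmt_11 (T c C : ℝ) (hT : 0 < T) (hc : 0 < c) (hC : 0 < C)
    (g A Δ δ ε : ℝ → ℝ)
    (hg : ContinuousOn g (Set.Ico (0:ℝ) T))
    (hΔc : ContinuousOn Δ (Set.Ico (0:ℝ) T))
    (hδc : ContinuousOn δ (Set.Ico (0:ℝ) T))
    (hderiv : ∀ t ∈ Set.Ico (0:ℝ) T, HasDerivAt (fun s => g s * A s) (-Δ t + δ t) t)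
    (hApos : ∀ t ∈ Set.Ico (0:ℝ) T, 0 < A t)
    (hεnn : ∀ t ∈ Set.Ico (0:ℝ) T, 0 ≤ ε t)
    (hεlim : Filter.Tendsto ε (nhdsWithin T (Set.Iio T)) (nhds 0))
    (hΔ : ∀ t ∈ Set.Ico (0:ℝ) T, |Δ t| ≤ ε t * Real.sqrt (2 * (T - t)))
    (hδ : ∀ t ∈ Set.Ico (0:ℝ) T, |δ t| ≤ C * (2 * (T - t)))
    (hgA : Filter.Tendsto (fun t => g t * A t) (nhdsWithin T (Set.Iio T)) (nhds 0))
    (hA : ∀ t ∈ Set.Ico (0:ℝ) T, c * (2 * (T - t)) ≤ A t) :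
    ∃ C' > 0, ∀ t ∈ Set.Ico (0:ℝ) T, |g t| ≤ C' * Real.sqrt (2 * (T - t)) :=
  stmt_11_general T c C hc g A Δ δ ε hderiv hεlim hΔ hδ hgA hA
end

section
/- With σ̄ the quadratic extension defined above, if |σ_θ(θ̲)|, |σ_θ(θ̄)| ≤ δ, θ̲ ≤ δ, π − θ̄ ≤ δ, and θ̲ ≥ cδ, π − θ̄ ≥ cδ for some 0 < c ≤ 1, then ‖σ − 1‖_{C⁰([θ̲,θ̄])} ≤ ‖σ̄ − 1‖_{C⁰([0,π])} ≤ ‖σ − 1‖_{C⁰([θ̲,θ̄])} + Cδ² for a constant C depending only on c. Moreover σ̄ − 1 is monotone decreasing on [0, θ̲] if σ_θ(θ̲) ≤ 0 and monotone increasing on [θ̄, π] if σ_θ(θ̄) ≥ 0. -/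
/-!
On `[0, θ̲]` the extension is `σ(θ̲) - 1 + a̲ (θ² - θ̲²)` with `a̲ = σ_θ(θ̲) / (2θ̲)`, so it deviates
from `σ(θ̲) - 1` by at most `|σ_θ(θ̲)| θ̲ / 2 ≤ δ² / 2`. Writing `θ² - 2πθ = (π - θ)² - π²` shows that
on `[θ̄, π]` it is the same kind of even quadratic in the reflected variable `π - θ`, so `C = 1`
works. Monotonicity follows from the sign of the leading coefficient.
-/

open Real Set

noncomputable def neumannQuad (v s t θ : ℝ) : ℝ := v + s / (2 * t) * (θ ^ 2 - t ^ 2)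

section NeumannQuad

variable {v s t θ δ : ℝ}

@[simp]
lemma neumannQuad_self : neumannQuad v s t t = v := by
  simp [neumannQuad]

lemma abs_neumannQuad_sub_le (ht : 0 < t) (hθ : θ ∈ Icc 0 t) :
    |neumannQuad v s t θ - v| ≤ |s| * t / 2 := by
  have hsq : |θ ^ 2 - t ^ 2| ≤ t ^ 2 := by
    rw [abs_sub_comm, abs_of_nonneg (by nlinarith [hθ.1, hθ.2])]
    nlinarith [sq_nonneg θ]
  calc |neumannQuad v s t θ - v| = |s| / (2 * t) * |θ ^ 2 - t ^ 2| := by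
        rw [neumannQuad, add_sub_cancel_left, abs_mul, abs_div, abs_of_pos (by positivity : 0 < 2 * t)]
    _ ≤ |s| / (2 * t) * t ^ 2 := by gcongr
    _ = |s| * t / 2 := by field_simp

lemma abs_neumannQuad_le (ht : 0 < t) (hθ : θ ∈ Icc 0 t) (hs : |s| ≤ δ) (htδ : t ≤ δ) :
    |neumannQuad v s t θ| ≤ |v| + δ ^ 2 := by
  have hdev := abs_neumannQuad_sub_le (v := v) (s := s) ht hθ
  have hst : |s| * t ≤ δ ^ 2 := by nlinarith [abs_nonneg s]
  have := abs_sub_abs_le_abs_sub (neumannQuad v s t θ) v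
  nlinarith [abs_nonneg s]

lemma neumannQuad_antitoneOn (hs : s ≤ 0) (ht : 0 < t) :
    AntitoneOn (neumannQuad v s t) (Ici 0) := by
  intro x hx y _ hxy
  have hcoef : s / (2 * t) ≤ 0 := div_nonpos_of_nonpos_of_nonneg hs (by positivity)
  have hsq : x ^ 2 - t ^ 2 ≤ y ^ 2 - t ^ 2 := by gcongr
  simpa [neumannQuad] using mul_le_mul_of_nonpos_left hsq hcoef

end NeumannQuad

section Extension

variable {f u : ℝ → ℝ} {v s s₁ s₂ δ t₁ t₂ b : ℝ}

lemma antitoneOn_of_eqOn_neumannQuad (hs : s ≤ 0) (ht : 0 < t₁)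
    (hu : EqOn u (neumannQuad v s t₁) (Icc 0 t₁)) : AntitoneOn u (Icc 0 t₁) :=
  ((neumannQuad_antitoneOn hs ht).mono Icc_subset_Ici_self).congr hu.symm

lemma monotoneOn_of_eqOn_neumannQuad_reflect (hs : s ≤ 0) (ht : t₂ < b)
    (hu : EqOn u (fun θ => neumannQuad v s (b - t₂) (b - θ)) (Icc t₂ b)) :
    MonotoneOn u (Icc t₂ b) := by
  intro x hx y hy hxy
  rw [hu hx, hu hy]
  exact neumannQuad_antitoneOn hs (sub_pos.2 ht) (sub_nonneg.2 hy.2) (sub_nonneg.2 hx.2)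
    (by linarith)

lemma abs_le_csSup_add_sq_of_neumann (hf : ContinuousOn f (Icc t₁ t₂)) (ht₁ : 0 < t₁)
    (ht₁₂ : t₁ ≤ t₂) (ht₂ : t₂ < b) (hs₁ : |s₁| ≤ δ) (hs₂ : |s₂| ≤ δ) (ht₁δ : t₁ ≤ δ)
    (ht₂δ : b - t₂ ≤ δ) (hL : EqOn u (neumannQuad (f t₁) s₁ t₁) (Icc 0 t₁))
    (hM : EqOn u f (Icc t₁ t₂))
    (hR : EqOn u (fun θ => neumannQuad (f t₂) s₂ (b - t₂) (b - θ)) (Icc t₂ b)) :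
    ∀ θ ∈ Icc 0 b, |u θ| ≤ sSup ((fun θ => |f θ|) '' Icc t₁ t₂) + δ ^ 2 := by
  have hbdd : BddAbove ((fun θ => |f θ|) '' Icc t₁ t₂) :=
    (isCompact_Icc.image_of_continuousOn hf.abs).bddAbove
  have hle : ∀ θ ∈ Icc t₁ t₂, |f θ| ≤ sSup ((fun θ => |f θ|) '' Icc t₁ t₂) :=
    fun θ hθ => le_csSup hbdd (mem_image_of_mem _ hθ)
  intro θ hθ
  rcases le_or_gt θ t₁ with h₁ | h₁
  · rw [hL ⟨hθ.1, h₁⟩]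
    linarith [abs_neumannQuad_le ht₁ ⟨hθ.1, h₁⟩ hs₁ ht₁δ (v := f t₁), hle t₁ ⟨le_rfl, ht₁₂⟩]
  rcases le_or_gt θ t₂ with h₂ | h₂
  · rw [hM ⟨h₁.le, h₂⟩]
    linarith [hle θ ⟨h₁.le, h₂⟩, sq_nonneg δ]
  · rw [hR ⟨h₂.le, hθ.2⟩]
    linarith [abs_neumannQuad_le (sub_pos.2 ht₂) ⟨sub_nonneg.2 hθ.2, by linarith⟩ hs₂ ht₂δ
      (v := f t₂), hle t₂ ⟨ht₁₂, le_rfl⟩]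

end Extension

lemma csSup_image_le_and_le_add_of_eqOn {f g : ℝ → ℝ} {s t : Set ℝ} {ε : ℝ} (hst : s ⊆ t)
    (hs : s.Nonempty) (hgf : EqOn g f s) (hg : ∀ x ∈ t, g x ≤ sSup (f '' s) + ε) :
    sSup (f '' s) ≤ sSup (g '' t) ∧ sSup (g '' t) ≤ sSup (f '' s) + ε := by
  have hgt : BddAbove (g '' t) := ⟨_, forall_mem_image.2 hg⟩
  refine ⟨csSup_le_csSup hgt (hs.image f) ?_, csSup_le (hs.mono hst |>.image g) ?_⟩
  · rw [← hgf.image_eq]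
    exact image_mono hst
  · exact forall_mem_image.2 hg

theorem stmt_14_general (c : ℝ) :
    ∃ C > 0, ∀ (σ : ℝ → ℝ) (δ t1 t2 : ℝ), ContDiff ℝ 2 σ →
      0 < δ → 0 < t1 → t1 < t2 → t2 < Real.pi →
      |deriv σ t1| ≤ δ → |deriv σ t2| ≤ δ →
      t1 ≤ δ → Real.pi - t2 ≤ δ →
      c * δ ≤ t1 → c * δ ≤ Real.pi - t2 →
      let a1 : ℝ := deriv σ t1 / (2 * t1)
      let c1 : ℝ := σ t1 - 1 - a1 * t1 ^ 2
      let a2 : ℝ := -(deriv σ t2) / (2 * (Real.pi - t2))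
      let b2 : ℝ := -2 * Real.pi * a2
      let c2 : ℝ := σ t2 - 1 - a2 * t2 ^ 2 - b2 * t2
      let sbar : ℝ → ℝ := fun θ =>
        if θ < t1 then 1 + (a1 * θ ^ 2 + c1)
        else if θ ≤ t2 then σ θ
        else 1 + (a2 * θ ^ 2 + b2 * θ + c2)
      sSup ((fun θ => |σ θ - 1|) '' Set.Icc t1 t2) ≤
          sSup ((fun θ => |sbar θ - 1|) '' Set.Icc 0 Real.pi) ∧
        sSup ((fun θ => |sbar θ - 1|) '' Set.Icc 0 Real.pi) ≤
          sSup ((fun θ => |σ θ - 1|) '' Set.Icc t1 t2) + C * δ ^ 2 ∧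
        (deriv σ t1 ≤ 0 → AntitoneOn (fun θ => sbar θ - 1) (Set.Icc 0 t1)) ∧
        (0 ≤ deriv σ t2 → MonotoneOn (fun θ => sbar θ - 1) (Set.Icc t2 Real.pi)) := by
  refine ⟨1, one_pos, fun σ δ t1 t2 hσ _ ht1 ht12 ht2 hd1 hd2 ht1δ ht2δ _ _ => ?_⟩
  intro a1 c1 a2 b2 c2 sbar
  have hM : EqOn (fun θ => sbar θ - 1) (fun θ => σ θ - 1) (Icc t1 t2) := fun θ hθ => by
    simp [sbar, not_lt.2 hθ.1, hθ.2]
  have hL : EqOn (fun θ => sbar θ - 1) (neumannQuad (σ t1 - 1) (deriv σ t1) t1) (Icc 0 t1) := by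
    intro θ hθ
    rcases hθ.2.lt_or_eq with h | rfl
    · simp only [sbar, a1, c1, if_pos h, neumannQuad]; ring
    · simpa using hM ⟨le_rfl, ht12.le⟩
  have hR : EqOn (fun θ => sbar θ - 1)
      (fun θ => neumannQuad (σ t2 - 1) (-deriv σ t2) (π - t2) (π - θ)) (Icc t2 π) := by
    intro θ hθ
    rcases hθ.1.lt_or_eq with h | rfl
    · simp only [sbar, a2, b2, c2, if_neg (not_lt.2 (ht12.trans h).le), if_neg (not_le.2 h),
        neumannQuad]
      ring
    · simpa using hM ⟨ht12.le, le_rfl⟩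
  have hbound := abs_le_csSup_add_sq_of_neumann (hσ.continuous.sub continuous_const).continuousOn
    ht1 ht12.le ht2 hd1 (by rwa [abs_neg]) ht1δ ht2δ hL hM hR
  obtain ⟨hlow, hup⟩ := csSup_image_le_and_le_add_of_eqOn (Icc_subset_Icc ht1.le ht2.le)
    (nonempty_Icc.2 ht12.le) (fun θ hθ => congrArg abs (hM hθ)) hbound
  exact ⟨hlow, by rwa [one_mul], fun h => antitoneOn_of_eqOn_neumannQuad h ht1 hL,
    fun h => monotoneOn_of_eqOn_neumannQuad_reflect (neg_nonpos.2 h) ht2 hR⟩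

/-- for the piecewise-quadratic Neumann extension σ̄ of σ, if the
boundary slopes and endpoint gaps are of size δ and the gaps are ≥ cδ, then
‖σ−1‖_{C⁰([θ̲,θ̄])} ≤ ‖σ̄−1‖_{C⁰([0,π])} ≤ ‖σ−1‖_{C⁰([θ̲,θ̄])} + Cδ² with C = C(c);
moreover σ̄ − 1 is decreasing on [0,θ̲] if σ_θ(θ̲) ≤ 0 and increasing on [θ̄,π]
if σ_θ(θ̄) ≥ 0. -/
theorem stmt_14 (c : ℝ) (hc0 : 0 < c) (hc1 : c ≤ 1) :
    ∃ C > 0, ∀ (σ : ℝ → ℝ) (δ t1 t2 : ℝ), ContDiff ℝ 2 σ →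
      0 < δ → 0 < t1 → t1 < t2 → t2 < Real.pi →
      |deriv σ t1| ≤ δ → |deriv σ t2| ≤ δ →
      t1 ≤ δ → Real.pi - t2 ≤ δ →
      c * δ ≤ t1 → c * δ ≤ Real.pi - t2 →
      let a1 : ℝ := deriv σ t1 / (2 * t1)
      let c1 : ℝ := σ t1 - 1 - a1 * t1 ^ 2
      let a2 : ℝ := -(deriv σ t2) / (2 * (Real.pi - t2))
      let b2 : ℝ := -2 * Real.pi * a2
      let c2 : ℝ := σ t2 - 1 - a2 * t2 ^ 2 - b2 * t2
      let sbar : ℝ → ℝ := fun θ =>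
        if θ < t1 then 1 + (a1 * θ ^ 2 + c1)
        else if θ ≤ t2 then σ θ
        else 1 + (a2 * θ ^ 2 + b2 * θ + c2)
      sSup ((fun θ => |σ θ - 1|) '' Set.Icc t1 t2) ≤
          sSup ((fun θ => |sbar θ - 1|) '' Set.Icc 0 Real.pi) ∧
        sSup ((fun θ => |sbar θ - 1|) '' Set.Icc 0 Real.pi) ≤
          sSup ((fun θ => |σ θ - 1|) '' Set.Icc t1 t2) + C * δ ^ 2 ∧
        (deriv σ t1 ≤ 0 → AntitoneOn (fun θ => sbar θ - 1) (Set.Icc 0 t1)) ∧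
        (0 ≤ deriv σ t2 → MonotoneOn (fun θ => sbar θ - 1) (Set.Icc t2 Real.pi)) :=
  stmt_14_general c
end
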